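/- arXiv:1304.5261 — 4 statements merged into one kernel-verified Lean document; each statement's English description precedes it below -/
import Mathlib

section
/- Let 𝔑₁, 𝔑₂ be von Neumann algebras on a Hilbert space H with 𝔑₁ ⊆ 𝔑₂′, and let ω be a state on the algebra generated by 𝔑₁ and 𝔑₂. Suppose there exist projections E₁, F₁ ∈ 𝔑₁ and E₂, F₂ ∈ 𝔑₂ such that ω((E₁-E₂)²) = ω((F₁-F₂)²) = 0 and ω([E₁,F₁]*[E₁,F₁]) ≠ 0. Then there exist self-adjoint contractions A₁, B₁ ∈ 𝔑₁ and A₂, B₂ ∈ 𝔑₂ with (1/2)|ω(A₁A₂ + A₁B₂ + B₁A₂ - B₁B₂)| > 1, i.e., ω is Bell correlated. -/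
/-!
Put `P = E₁ + F₁ - 1`, `Q = E₁ - F₁` and `C = [E₁, F₁]`. For projections `P² + Q² = 1` and
`QP = -PQ = C`, hence `P⁴ + Q⁴ = 1 + 2C² = 1 - 2C⋆C`. By Cauchy–Schwarz, the EPR conditions make
`ω` vanish on the left ideals generated by `E₁ - E₂` and `F₁ - F₂`; as `N₁` and `N₂` commute, this
lets one replace `E₂ + F₂ - 1` by `P` (and `E₂ - F₂` by `Q`) in `ω (X * g (·))` for any polynomial
`g`. With `g t = (3t - t³)/2`, which maps `[-1, 1]` into itself, the observables `2E₁ - 1`,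
`2F₁ - 1`, `g (E₂ + F₂ - 1)`, `g (E₂ - F₂)` have CHSH value
`2 ω (P g(P) + Q g(Q)) = 3 - ω (P⁴ + Q⁴) = 2 + 2 ω (C⋆C) > 2`.
-/

open Polynomial
open scoped ComplexOrder

lemma Complex.eq_zero_of_forall_real_mul_add_nonneg {s g : ℂ} (h : ∀ t : ℝ, 0 ≤ t * s + g) :
    s = 0 := by
  have hlin : ∀ t : ℝ, 0 ≤ t * s.re + g.re ∧ 0 = t * s.im + g.im := fun t ↦ by
    simpa using Complex.nonneg_iff.mp (h t)
  have him : s.im = 0 := by linarith [(hlin 0).2, (hlin 1).2]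
  have hre : s.re = 0 := by
    by_contra hs
    have := (hlin (-(g.re + 1) / s.re)).1
    rw [div_mul_cancel₀ _ hs] at this
    linarith
  exact Complex.ext hre him

lemma Complex.one_lt_half_mul_norm_two_add_two_mul {z : ℂ} (hz : 0 < z) :
    1 < 1 / 2 * ‖2 + 2 * z‖ :=
  calc (1 : ℝ) < 1 + z.re := by linarith [(Complex.pos_iff.mp hz).1]
    _ = 1 / 2 * (2 + 2 * z).re := by
      simp only [add_re, re_ofNat, mul_re, im_ofNat, zero_mul, sub_zero]
      ring
    _ ≤ 1 / 2 * ‖2 + 2 * z‖ := by gcongr; exact Complex.re_le_norm _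

namespace LinearMap

section Positive

variable {A : Type*} [Ring A] [StarRing A] [Algebra ℂ A] [StarModule ℂ A]
  (ω : A →ₗ[ℂ] ℂ) (hω : ∀ a, 0 ≤ ω (star a * a))
include hω

lemma map_mul_eq_zero_of_map_star_mul_self_eq_zero {x : A} (hx : ω (star x * x) = 0) (y : A) :
    ω (y * x) = 0 := by
  suffices h : ∀ z, ω (star z * x) = 0 by simpa using h (star y)
  intro z
  have expand : ∀ c : ℂ, ω (star (c • x + z) * (c • x + z)) =
      c * ω (star z * x) + star c * ω (star x * z) + ω (star z * z) := by
    intro c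
    simp only [star_add, star_smul, add_mul, mul_add, smul_mul_assoc, mul_smul_comm,
      map_add, map_smul, hx, smul_eq_mul]
    ring
  have hsum : ω (star z * x) + ω (star x * z) = 0 :=
    Complex.eq_zero_of_forall_real_mul_add_nonneg (g := ω (star z * z)) fun t ↦ by
      convert hω ((t : ℂ) • x + z) using 1
      rw [expand, Complex.star_def, Complex.conj_ofReal]
      ring
  have hdiff : Complex.I * (ω (star z * x) - ω (star x * z)) = 0 :=
    Complex.eq_zero_of_forall_real_mul_add_nonneg (g := ω (star z * z)) fun t ↦ by
      convert hω (((t : ℂ) * Complex.I) • x + z) using 1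
      rw [expand, star_mul', Complex.star_def, Complex.conj_ofReal, Complex.conj_I]
      ring
  rw [mul_eq_zero, or_iff_right Complex.I_ne_zero] at hdiff
  linear_combination (hsum + hdiff) / 2

lemma map_mul_eq_of_map_sub_mul_self_eq_zero {x y : A} (hxy : IsSelfAdjoint (x - y))
    (h : ω ((x - y) * (x - y)) = 0) (w : A) : ω (w * y) = ω (w * x) := by
  have := ω.map_mul_eq_zero_of_map_star_mul_self_eq_zero hω (x := x - y) (by rwa [hxy.star_eq]) w
  rw [mul_sub, map_sub, sub_eq_zero] at this
  exact this.symm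

end Positive
end LinearMap

lemma apply_mul_pow_eq_of_commute {A M : Type*} [Monoid A] (f : A → M) {x y : A}
    (hxy : Commute x y) (h : ∀ w, f (w * y) = f (w * x)) (n : ℕ) (w : A) :
    f (w * y ^ n) = f (w * x ^ n) := by
  induction n generalizing w with
  | zero => simp
  | succ n ih =>
    calc f (w * y ^ (n + 1)) = f (w * y ^ n * x) := by rw [pow_succ, ← mul_assoc, h]
      _ = f (w * x * y ^ n) := by rw [mul_assoc, mul_assoc, (hxy.pow_right n).eq]
      _ = f (w * x ^ (n + 1)) := by rw [ih, mul_assoc, ← pow_succ']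

lemma Polynomial.aeval_mem_of_mem {R A : Type*} [CommSemiring R] [Semiring A] [Algebra R A]
    {S : Subalgebra R A} {x : A} (hx : x ∈ S) (p : R[X]) : aeval x p ∈ S :=
  Algebra.adjoin_le (Set.singleton_subset_iff.mpr hx) (aeval_mem_adjoin_singleton R x)

lemma LinearMap.map_mul_aeval_eq_of_commute {R A M : Type*} [CommSemiring R] [Semiring A]
    [Algebra R A] [AddCommMonoid M] [Module R M] (f : A →ₗ[R] M) {x y : A} (hxy : Commute x y)
    (h : ∀ w, f (w * y) = f (w * x)) (p : R[X]) (w : A) :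
    f (w * aeval y p) = f (w * aeval x p) := by
  induction p using Polynomial.induction_on' with
  | add p q hp hq => rw [map_add, map_add, mul_add, mul_add, map_add, map_add, hp, hq]
  | monomial n c =>
    simp only [aeval_monomial, ← Algebra.smul_def, mul_smul_comm, map_smul,
      apply_mul_pow_eq_of_commute f hxy h]

namespace IsIdempotentElem

variable {R : Type*} [Ring R] {e f : R}

lemma add_sub_one_sq_add_sub_sq (he : IsIdempotentElem e) (hf : IsIdempotentElem f) :
    (e + f - 1) ^ 2 + (e - f) ^ 2 = 1 := by
  calc (e + f - 1) ^ 2 + (e - f) ^ 2 = 2 * (e * e) + 2 * (f * f) - 2 * e - 2 * f + 1 := by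
        noncomm_ring
    _ = 1 := by rw [he.eq, hf.eq]; abel

lemma sub_mul_add_sub_one (he : IsIdempotentElem e) (hf : IsIdempotentElem f) :
    (e - f) * (e + f - 1) = e * f - f * e := by
  calc (e - f) * (e + f - 1) = e * e - e - f * f + f + e * f - f * e := by noncomm_ring
    _ = e * f - f * e := by rw [he.eq, hf.eq]; abel

lemma add_sub_one_mul_sub (he : IsIdempotentElem e) (hf : IsIdempotentElem f) :
    (e + f - 1) * (e - f) = -(e * f - f * e) := by
  calc (e + f - 1) * (e - f) = e * e - e - f * f + f - e * f + f * e := by noncomm_ring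
    _ = -(e * f - f * e) := by rw [he.eq, hf.eq]; abel

lemma add_sub_one_pow_four_add_sub_pow_four (he : IsIdempotentElem e)
    (hf : IsIdempotentElem f) :
    (e + f - 1) ^ 4 + (e - f) ^ 4 = 1 + 2 * (e * f - f * e) ^ 2 := by
  set P := e + f - 1
  set Q := e - f
  set C := e * f - f * e
  have hPQ : P * Q = -C := he.add_sub_one_mul_sub hf
  have hQP : Q * P = C := he.sub_mul_add_sub_one hf
  have hPQ2 : P ^ 2 * Q ^ 2 = -C ^ 2 :=
    calc P ^ 2 * Q ^ 2 = P * (P * Q) * Q := by noncomm_ring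
      _ = -(P * (Q * P) * Q) := by rw [hPQ, hQP]; noncomm_ring
      _ = -((P * Q) * (P * Q)) := by noncomm_ring
      _ = -C ^ 2 := by rw [hPQ]; noncomm_ring
  have hQ2 : Q ^ 2 = 1 - P ^ 2 := eq_sub_of_add_eq' (he.add_sub_one_sq_add_sub_sq hf)
  calc P ^ 4 + Q ^ 4 = 1 - 2 * (P ^ 2 * Q ^ 2) := by
        rw [show Q ^ 4 = (Q ^ 2) ^ 2 by noncomm_ring, hQ2]; noncomm_ring
    _ = 1 + 2 * C ^ 2 := by rw [hPQ2]; noncomm_ring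

end IsIdempotentElem

lemma IsSelfAdjoint.norm_le_one_of_mul_self_eq_one {A : Type*} [NormedRing A] [StarRing A]
    [CStarRing A] {a : A} (ha : IsSelfAdjoint a) (h : a * a = 1) : ‖a‖ ≤ 1 := by
  have h₁ : ‖a‖ * ‖a‖ = ‖(1 : A)‖ := by rw [← CStarRing.norm_star_mul_self, ha.star_eq, h]
  have h₂ : ‖(1 : A)‖ * ‖(1 : A)‖ = ‖(1 : A)‖ := by
    simpa using (CStarRing.norm_star_mul_self (x := (1 : A))).symm
  have h₃ : ‖(1 : A)‖ ≤ 1 := by nlinarith [norm_nonneg (1 : A)]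
  nlinarith [norm_nonneg a]

namespace IsStarProjection

lemma isSelfAdjoint_two_mul_sub_one {R : Type*} [Ring R] [StarRing R] {e : R}
    (he : IsStarProjection e) : IsSelfAdjoint (2 * e - 1) := by
  rw [two_mul]
  exact (he.isSelfAdjoint.add he.isSelfAdjoint).sub (.one _)

variable {A : Type*} [CStarAlgebra A] {e f : A}

lemma norm_two_mul_sub_one_le (he : IsStarProjection e) : ‖2 * e - 1‖ ≤ 1 := by
  refine he.isSelfAdjoint_two_mul_sub_one.norm_le_one_of_mul_self_eq_one ?_
  calc (2 * e - 1) * (2 * e - 1) = 4 * (e * e) - 4 * e + 1 := by noncomm_ring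
    _ = 1 := by rw [he.isIdempotentElem.eq]; abel

lemma norm_add_sub_one_le (he : IsStarProjection e) (hf : IsStarProjection f) :
    ‖e + f - 1‖ ≤ 1 := by
  have h := norm_add_le (2 * e - 1) (2 * f - 1)
  rw [show 2 * e - 1 + (2 * f - 1) = (2 : ℝ) • (e + f - 1) by rw [two_smul]; noncomm_ring,
    norm_smul, Real.norm_two] at h
  linarith [he.norm_two_mul_sub_one_le, hf.norm_two_mul_sub_one_le]

lemma norm_sub_le (he : IsStarProjection e) (hf : IsStarProjection f) : ‖e - f‖ ≤ 1 := by
  have h := _root_.norm_sub_le (2 * e - 1) (2 * f - 1)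
  rw [show 2 * e - 1 - (2 * f - 1) = (2 : ℝ) • (e - f) by rw [two_smul]; noncomm_ring,
    norm_smul, Real.norm_two] at h
  linarith [he.norm_two_mul_sub_one_le, hf.norm_two_mul_sub_one_le]

end IsStarProjection

noncomputable def chshPoly : ℝ[X] := C (3 / 2) * X - C (1 / 2) * X ^ 3

section CStarAlgebra

variable {A : Type*} [CStarAlgebra A]

lemma IsSelfAdjoint.aeval {a : A} (ha : IsSelfAdjoint a) (p : ℝ[X]) :
    IsSelfAdjoint (aeval a p) := by
  rw [← cfc_polynomial p a]
  exact cfc_predicate _ _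

lemma norm_aeval_chshPoly_le_one {a : A} (ha : IsSelfAdjoint a) (h : ‖a‖ ≤ 1) :
    ‖aeval a chshPoly‖ ≤ 1 := by
  nontriviality A
  rw [← cfc_polynomial chshPoly a]
  refine norm_cfc_le zero_le_one fun t ht ↦ ?_
  have ht₁ : |t| ≤ 1 := by simpa using (spectrum.norm_le_norm_of_mem ht).trans h
  rw [abs_le] at ht₁
  simp only [chshPoly, eval_sub, eval_mul, eval_C, eval_X, eval_pow, Real.norm_eq_abs, abs_le]
  constructor <;> nlinarith [mul_nonneg (sq_nonneg (1 - t)) (by linarith : 0 ≤ 2 + t),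
    mul_nonneg (sq_nonneg (1 + t)) (by linarith : 0 ≤ 2 - t)]

end CStarAlgebra

lemma map_mul_aeval_chshPoly {A : Type*} [Ring A] [Algebra ℂ A] (ω : A →ₗ[ℂ] ℂ) (x : A) :
    ω (x * aeval x chshPoly) = 3 / 2 * ω (x ^ 2) - 1 / 2 * ω (x ^ 4) := by
  simp only [chshPoly, map_sub, map_mul, aeval_C, aeval_X, map_pow, ← Algebra.smul_def, mul_sub,
    mul_smul_comm, LinearMap.map_smul_of_tower, Complex.real_smul]
  rw [← sq, ← pow_succ']
  norm_num

lemma map_chsh_eq {A : Type*} [Ring A] [StarRing A] [Algebra ℂ A] (ω : A →ₗ[ℂ] ℂ)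
    (hone : ω 1 = 1) {e f a b : A} (he : IsStarProjection e) (hf : IsStarProjection f)
    (ha : ω ((e + f - 1) * a) = ω ((e + f - 1) * aeval (e + f - 1) chshPoly))
    (hb : ω ((e - f) * b) = ω ((e - f) * aeval (e - f) chshPoly)) :
    ω ((2 * e - 1) * a + (2 * e - 1) * b + (2 * f - 1) * a - (2 * f - 1) * b) =
      2 + 2 * ω (star (e * f - f * e) * (e * f - f * e)) := by
  have hchsh : (2 * e - 1) * a + (2 * e - 1) * b + (2 * f - 1) * a - (2 * f - 1) * b =
      2 • ((e + f - 1) * a + (e - f) * b) := by noncomm_ring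
  have hskew : star (e * f - f * e) * (e * f - f * e) = -(e * f - f * e) ^ 2 := by
    rw [star_sub, star_mul, star_mul, he.isSelfAdjoint.star_eq, hf.isSelfAdjoint.star_eq]
    noncomm_ring
  have h₂ := congrArg ω (he.isIdempotentElem.add_sub_one_sq_add_sub_sq hf.isIdempotentElem)
  have h₄ := congrArg ω
    (he.isIdempotentElem.add_sub_one_pow_four_add_sub_pow_four hf.isIdempotentElem)
  rw [map_add, hone] at h₂
  rw [map_add, map_add, hone, two_mul, map_add] at h₄
  rw [hchsh, map_nsmul, map_add, ha, hb, map_mul_aeval_chshPoly, map_mul_aeval_chshPoly, hskew,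
    map_neg, two_nsmul]
  linear_combination 3 * h₂ - h₄

/-- Theorem 2 of the paper: every EPR state for incommensurable pairs is
Bell correlated. -/
theorem stmt_3 {H : Type*} [NormedAddCommGroup H] [InnerProductSpace ℂ H] [CompleteSpace H]
    (N₁ N₂ : VonNeumannAlgebra H)
    (hNcomm : ∀ x ∈ N₁, ∀ y ∈ N₂, x * y = y * x)
    (ω : (H →L[ℂ] H) →ₗ[ℂ] ℂ)
    (hpos : ∀ X : H →L[ℂ] H, 0 ≤ (ω (star X * X)).re ∧ (ω (star X * X)).im = 0)
    (hone : ω 1 = 1)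
    (E₁ F₁ E₂ F₂ : H →L[ℂ] H)
    (hE₁ : E₁ ∈ N₁) (hF₁ : F₁ ∈ N₁) (hE₂ : E₂ ∈ N₂) (hF₂ : F₂ ∈ N₂)
    (hE₁p : IsIdempotentElem E₁) (hE₁sa : IsSelfAdjoint E₁)
    (hF₁p : IsIdempotentElem F₁) (hF₁sa : IsSelfAdjoint F₁)
    (hE₂p : IsIdempotentElem E₂) (hE₂sa : IsSelfAdjoint E₂)
    (hF₂p : IsIdempotentElem F₂) (hF₂sa : IsSelfAdjoint F₂)
    (hEPRE : ω ((E₁ - E₂) * (E₁ - E₂)) = 0)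
    (hEPRF : ω ((F₁ - F₂) * (F₁ - F₂)) = 0)
    (hnc : ω (star (E₁ * F₁ - F₁ * E₁) * (E₁ * F₁ - F₁ * E₁)) ≠ 0) :
    ∃ A₁ ∈ N₁, ∃ B₁ ∈ N₁, ∃ A₂ ∈ N₂, ∃ B₂ ∈ N₂,
      IsSelfAdjoint A₁ ∧ ‖A₁‖ ≤ 1 ∧ IsSelfAdjoint B₁ ∧ ‖B₁‖ ≤ 1 ∧
      IsSelfAdjoint A₂ ∧ ‖A₂‖ ≤ 1 ∧ IsSelfAdjoint B₂ ∧ ‖B₂‖ ≤ 1 ∧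
      1 < (1 / 2) * ‖ω (A₁ * A₂ + A₁ * B₂ + B₁ * A₂ - B₁ * B₂)‖ := by
  have hω : ∀ X, 0 ≤ ω (star X * X) := fun X ↦ Complex.nonneg_iff.mpr ⟨(hpos X).1, (hpos X).2.symm⟩
  have hE : ∀ w, ω (w * E₂) = ω (w * E₁) :=
    ω.map_mul_eq_of_map_sub_mul_self_eq_zero hω (hE₁sa.sub hE₂sa) hEPRE
  have hF : ∀ w, ω (w * F₂) = ω (w * F₁) :=
    ω.map_mul_eq_of_map_sub_mul_self_eq_zero hω (hF₁sa.sub hF₂sa) hEPRF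
  have hP₁ : E₁ + F₁ - 1 ∈ N₁ := sub_mem (add_mem hE₁ hF₁) (one_mem _)
  have hQ₁ : E₁ - F₁ ∈ N₁ := sub_mem hE₁ hF₁
  have hP₂ : E₂ + F₂ - 1 ∈ N₂ := sub_mem (add_mem hE₂ hF₂) (one_mem _)
  have hQ₂ : E₂ - F₂ ∈ N₂ := sub_mem hE₂ hF₂
  have hA₂ := (ω.restrictScalars ℝ).map_mul_aeval_eq_of_commute (hNcomm _ hP₁ _ hP₂)
    (fun w ↦ by
      simp only [LinearMap.coe_restrictScalars, mul_sub, mul_add, map_sub, map_add, hE, hF])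
    chshPoly (E₁ + F₁ - 1)
  have hB₂ := (ω.restrictScalars ℝ).map_mul_aeval_eq_of_commute (hNcomm _ hQ₁ _ hQ₂)
    (fun w ↦ by simp only [LinearMap.coe_restrictScalars, mul_sub, map_sub, hE, hF])
    chshPoly (E₁ - F₁)
  have he₁ : IsStarProjection E₁ := ⟨hE₁p, hE₁sa⟩
  have hf₁ : IsStarProjection F₁ := ⟨hF₁p, hF₁sa⟩
  have he₂ : IsStarProjection E₂ := ⟨hE₂p, hE₂sa⟩
  have hf₂ : IsStarProjection F₂ := ⟨hF₂p, hF₂sa⟩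
  have hp₂ : IsSelfAdjoint (E₂ + F₂ - 1) := (hE₂sa.add hF₂sa).sub (.one _)
  have hq₂ : IsSelfAdjoint (E₂ - F₂) := hE₂sa.sub hF₂sa
  refine ⟨2 * E₁ - 1, by rw [two_mul]; exact sub_mem (add_mem hE₁ hE₁) (one_mem _),
    2 * F₁ - 1, by rw [two_mul]; exact sub_mem (add_mem hF₁ hF₁) (one_mem _),
    aeval (E₂ + F₂ - 1) chshPoly, aeval_mem_of_mem (S := N₂.toSubalgebra.restrictScalars ℝ) hP₂ _,
    aeval (E₂ - F₂) chshPoly, aeval_mem_of_mem (S := N₂.toSubalgebra.restrictScalars ℝ) hQ₂ _,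
    he₁.isSelfAdjoint_two_mul_sub_one, he₁.norm_two_mul_sub_one_le,
    hf₁.isSelfAdjoint_two_mul_sub_one, hf₁.norm_two_mul_sub_one_le,
    hp₂.aeval _, norm_aeval_chshPoly_le_one hp₂ (he₂.norm_add_sub_one_le hf₂),
    hq₂.aeval _, norm_aeval_chshPoly_le_one hq₂ (he₂.norm_sub_le hf₂), ?_⟩
  rw [map_chsh_eq ω hone he₁ hf₁ hA₂ hB₂]
  exact Complex.one_lt_half_mul_norm_two_add_two_mul (lt_of_le_of_ne (hω _) (Ne.symm hnc))
end

section
/- Let A₁, B₁ be self-adjoint operators on a Hilbert space with A₁B₁ + B₁A₁ = 0 and A₁² = B₁² = S for a projection S with A₁, B₁ ∈ S B(H) S. Let E = (1/√2·(A₁+B₁) + S)/2 and F = (1/√2·(A₁-B₁) + S)/2. Then E and F are projections satisfying (2E - S)(2F - S) + (2F - S)(2E - S) = 0. -/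
/-!
Write `X = 2E - S` and `Y = 2F - S`, i.e. `X = (A₁ + B₁)/√2` and `Y = (A₁ - B₁)/√2`: the pair
`(X, Y)` is the pair `(A₁, B₁)` rotated by 45°. Anticommutation kills the cross terms, so
`X² = Y² = (A₁² + B₁²)/2 = S`, and `XY + YX = A₁² - B₁² = 0`. Since `X` is self-adjoint and
`X³ = XS = X`, the operator `(X + X²)/2 = E` is a self-adjoint idempotent, and likewise for `F`.
-/

theorem IsIdempotentElem.mul_eq_of_mul_mul_eq {R : Type*} [Semigroup R] {s a : R}
    (hs : IsIdempotentElem s) (h : s * a * s = a) : a * s = a := by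
  rw [← h, mul_assoc, hs.eq]

section Algebra

variable {𝕜 R : Type*} [Field 𝕜] [CharZero 𝕜] [Ring R] [Algebra 𝕜 R]

theorem mul_self_add_eq_of_anticomm {a b : R} (h : a * b + b * a = 0) :
    (a + b) * (a + b) = a * a + b * b := by
  rw [← add_zero (a * a + b * b), ← h]
  noncomm_ring

theorem mul_self_sub_eq_of_anticomm {a b : R} (h : a * b + b * a = 0) :
    (a - b) * (a - b) = a * a + b * b := by
  rw [← sub_zero (a * a + b * b), ← h]
  noncomm_ring

theorem rotate_anticomm {a b s : R} {c : 𝕜} (hc : c * c = 2⁻¹) (ha : a * a = s) (hb : b * b = s)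
    (h : a * b + b * a = 0) :
    c • (a + b) * c • (a + b) = s ∧ c • (a - b) * c • (a - b) = s ∧
      c • (a + b) * c • (a - b) + c • (a - b) * c • (a + b) = 0 := by
  simp only [smul_mul_smul, hc, ← smul_add, mul_self_add_eq_of_anticomm h,
    mul_self_sub_eq_of_anticomm h, ha, hb]
  refine ⟨by module, by module, ?_⟩
  have : (a + b) * (a - b) + (a - b) * (a + b) = 2 * (a * a - b * b) := by noncomm_ring
  rw [this, ha, hb, sub_self, mul_zero, smul_zero]

theorem isIdempotentElem_half_smul_add_mul_self {x : R} (hx : x * x * x = x) :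
    IsIdempotentElem ((2 : 𝕜)⁻¹ • (x + x * x)) := by
  have hx4 : x * x * (x * x) = x * x := by rw [← mul_assoc, hx]
  have key : (x + x * x) * (x + x * x) = (2 : 𝕜) • (x + x * x) := by
    rw [add_mul, mul_add, mul_add, ← mul_assoc, hx, hx4, two_smul]
    abel
  rw [IsIdempotentElem, smul_mul_smul, key, smul_smul]
  module

theorem isStarProjection_half_smul_add_mul_self [StarRing 𝕜] [StarRing R] [StarModule 𝕜 R]
    {x : R} (hsa : IsSelfAdjoint x) (hx : x * x * x = x) :
    IsStarProjection ((2 : 𝕜)⁻¹ • (x + x * x)) :=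
  ⟨isIdempotentElem_half_smul_add_mul_self hx,
    (IsSelfAdjoint.ofNat 2).inv₀.smul (hsa.add (sq x ▸ hsa.pow 2))⟩

end Algebra

theorem stmt_6_general {H : Type*} [NormedAddCommGroup H] [InnerProductSpace ℂ H] [CompleteSpace H]
    (S A₁ B₁ : H →L[ℂ] H)
    (hSp : IsIdempotentElem S)
    (hA₁sa : IsSelfAdjoint A₁) (hB₁sa : IsSelfAdjoint B₁)
    (hA₁S : S * A₁ * S = A₁) (hB₁S : S * B₁ * S = B₁)
    (hA₁sq : A₁ * A₁ = S) (hB₁sq : B₁ * B₁ = S)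
    (hanti : A₁ * B₁ + B₁ * A₁ = 0)
    (E F : H →L[ℂ] H)
    (hE : E = (2 : ℂ)⁻¹ • (((Real.sqrt 2 : ℂ))⁻¹ • (A₁ + B₁) + S))
    (hF : F = (2 : ℂ)⁻¹ • (((Real.sqrt 2 : ℂ))⁻¹ • (A₁ - B₁) + S)) :
    (IsIdempotentElem E ∧ IsSelfAdjoint E) ∧ (IsIdempotentElem F ∧ IsSelfAdjoint F) ∧
      ((2 : ℂ) • E - S) * ((2 : ℂ) • F - S) + ((2 : ℂ) • F - S) * ((2 : ℂ) • E - S) = 0 := by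
  set c : ℂ := (Real.sqrt 2 : ℂ)⁻¹
  have hc : c * c = 2⁻¹ := by
    rw [← mul_inv, ← Complex.ofReal_mul, Real.mul_self_sqrt zero_le_two, Complex.ofReal_ofNat]
  have hc_sa : IsSelfAdjoint c := IsSelfAdjoint.inv₀ (Complex.conj_ofReal _)
  set X := c • (A₁ + B₁)
  set Y := c • (A₁ - B₁)
  obtain ⟨hXX, hYY, hXY⟩ : X * X = S ∧ Y * Y = S ∧ X * Y + Y * X = 0 :=
    rotate_anticomm hc hA₁sq hB₁sq hanti
  have hAS := hSp.mul_eq_of_mul_mul_eq hA₁S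
  have hBS := hSp.mul_eq_of_mul_mul_eq hB₁S
  have hX : X * X * X = X := by rw [mul_assoc, hXX, smul_mul_assoc, add_mul, hAS, hBS]
  have hY : Y * Y * Y = Y := by rw [mul_assoc, hYY, smul_mul_assoc, sub_mul, hAS, hBS]
  have hE_proj :=
    isStarProjection_half_smul_add_mul_self (𝕜 := ℂ) (hc_sa.smul (hA₁sa.add hB₁sa)) hX
  have hF_proj :=
    isStarProjection_half_smul_add_mul_self (𝕜 := ℂ) (hc_sa.smul (hA₁sa.sub hB₁sa)) hY
  rw [hXX, ← hE] at hE_proj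
  rw [hYY, ← hF] at hF_proj
  have h_two_smul_half (Z : H →L[ℂ] H) : (2 : ℂ) • (2⁻¹ : ℂ) • (Z + S) - S = Z := by module
  refine ⟨⟨hE_proj.1, hE_proj.2⟩, ⟨hF_proj.1, hF_proj.2⟩, ?_⟩
  rwa [hE, hF, h_two_smul_half, h_two_smul_half]

/-- From anticommuting self-adjoint operators `A₁, B₁` supported on a projection
`S` with `A₁² = B₁² = S`, the operators `E = ((1/√2)(A₁+B₁) + S)/2` and
`F = ((1/√2)(A₁-B₁) + S)/2` are projections with `(2E-S)(2F-S) + (2F-S)(2E-S) = 0`. -/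
theorem stmt_6 {H : Type*} [NormedAddCommGroup H] [InnerProductSpace ℂ H] [CompleteSpace H]
    (S A₁ B₁ : H →L[ℂ] H)
    (hSp : IsIdempotentElem S) (hSsa : IsSelfAdjoint S)
    (hA₁sa : IsSelfAdjoint A₁) (hB₁sa : IsSelfAdjoint B₁)
    (hA₁S : S * A₁ * S = A₁) (hB₁S : S * B₁ * S = B₁)
    (hA₁sq : A₁ * A₁ = S) (hB₁sq : B₁ * B₁ = S)
    (hanti : A₁ * B₁ + B₁ * A₁ = 0)
    (E F : H →L[ℂ] H)
    (hE : E = (2 : ℂ)⁻¹ • (((Real.sqrt 2 : ℂ))⁻¹ • (A₁ + B₁) + S))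
    (hF : F = (2 : ℂ)⁻¹ • (((Real.sqrt 2 : ℂ))⁻¹ • (A₁ - B₁) + S)) :
    (IsIdempotentElem E ∧ IsSelfAdjoint E) ∧ (IsIdempotentElem F ∧ IsSelfAdjoint F) ∧
      ((2 : ℂ) • E - S) * ((2 : ℂ) • F - S) + ((2 : ℂ) • F - S) * ((2 : ℂ) • E - S) = 0 :=
  stmt_6_general S A₁ B₁ hSp hA₁sa hB₁sa hA₁S hB₁S hA₁sq hB₁sq hanti E F hE hF
end

section
/- Let A₁ = 2E₁ - S and B₁ = 2F₁ - S where E₁, F₁ ∈ S B(H) S are projections with A₁B₁ + B₁A₁ = 0 and A₁² = B₁² = S, and let ω be a state with ω(S) = 1. Then [E₁,F₁]*[E₁,F₁] = (1/16)[A₁,B₁]*[A₁,B₁] and ω([A₁,B₁]*[A₁,B₁]) = 4, hence ω([E₁,F₁]*[E₁,F₁]) = 1/4 ≠ 0. -/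
/-!
Since `A₁` and `B₁` are self-adjoint and anticommute, `[A₁,B₁] = 2A₁B₁` is skew-adjoint and
`[A₁,B₁]*[A₁,B₁] = -4 A₁B₁A₁B₁ = 4 A₁²B₁² = 4S`, so `ω` gives it the value `4`. Because `E₁` and
`F₁` live under `S`, the `S`-terms cancel in `[2E₁ - S, 2F₁ - S]`, leaving `[A₁,B₁] = 4[E₁,F₁]`.
-/

section Ring

variable {R : Type*} [Ring R]

lemma mul_self_commutator_of_anticommute {a b s : R} (hs : IsIdempotentElem s)
    (ha : a * a = s) (hb : b * b = s) (hab : a * b + b * a = 0) :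
    (a * b - b * a) * (a * b - b * a) = -(4 * s) := by
  have hba : b * a = -(a * b) := eq_neg_of_add_eq_zero_right hab
  have habab : a * b * (a * b) = -s := by
    calc a * b * (a * b) = a * (b * a) * b := by noncomm_ring
      _ = -((a * a) * (b * b)) := by rw [hba]; noncomm_ring
      _ = -s := by rw [ha, hb, hs.eq]
  calc (a * b - b * a) * (a * b - b * a) = 4 * (a * b * (a * b)) := by rw [hba]; noncomm_ring
    _ = -(4 * s) := by rw [habab, mul_neg]

end Ring

section StarRing

variable {R : Type*} [Ring R] [StarRing R]

lemma IsSelfAdjoint.star_commutator {a b : R} (ha : IsSelfAdjoint a) (hb : IsSelfAdjoint b) :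
    star (a * b - b * a) = -(a * b - b * a) := by
  rw [star_sub, star_mul, star_mul, ha.star_eq, hb.star_eq, neg_sub]

lemma IsSelfAdjoint.star_mul_self_commutator_of_anticommute {a b s : R}
    (ha : IsSelfAdjoint a) (hb : IsSelfAdjoint b) (hs : IsIdempotentElem s)
    (ha2 : a * a = s) (hb2 : b * b = s) (hab : a * b + b * a = 0) :
    star (a * b - b * a) * (a * b - b * a) = 4 * s := by
  rw [ha.star_commutator hb, neg_mul, mul_self_commutator_of_anticommute hs ha2 hb2 hab, neg_neg]

end StarRing

section Algebra

variable {k A : Type*} [CommRing k] [Ring A] [Algebra k A]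

lemma commutator_two_smul_sub {e f s : A} (hes : e * s = e) (hse : s * e = e)
    (hfs : f * s = f) (hsf : s * f = f) :
    ((2 : k) • e - s) * ((2 : k) • f - s) - ((2 : k) • f - s) * ((2 : k) • e - s) =
      (4 : k) • (e * f - f * e) := by
  simp only [sub_mul, mul_sub, smul_mul_assoc, mul_smul_comm, hes, hse, hfs, hsf]
  module

end Algebra

theorem stmt_8_general {H : Type*} [NormedAddCommGroup H] [InnerProductSpace ℂ H] [CompleteSpace H]
    (S E₁ F₁ : H →L[ℂ] H)
    (hSp : IsIdempotentElem S) (hSsa : IsSelfAdjoint S)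
    (hE₁sa : IsSelfAdjoint E₁)
    (hF₁sa : IsSelfAdjoint F₁)
    (hE₁S : S * E₁ = E₁) (hSE₁ : E₁ * S = E₁) (hF₁S : S * F₁ = F₁) (hSF₁ : F₁ * S = F₁)
    (A₁ B₁ : H →L[ℂ] H)
    (hA₁ : A₁ = (2 : ℂ) • E₁ - S) (hB₁ : B₁ = (2 : ℂ) • F₁ - S)
    (hanti : A₁ * B₁ + B₁ * A₁ = 0)
    (hA₁sq : A₁ * A₁ = S) (hB₁sq : B₁ * B₁ = S)
    (ω : (H →L[ℂ] H) →ₗ[ℂ] ℂ)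
    (hS : ω S = 1) :
    star (E₁ * F₁ - F₁ * E₁) * (E₁ * F₁ - F₁ * E₁) =
        (16 : ℂ)⁻¹ • (star (A₁ * B₁ - B₁ * A₁) * (A₁ * B₁ - B₁ * A₁)) ∧
      ω (star (A₁ * B₁ - B₁ * A₁) * (A₁ * B₁ - B₁ * A₁)) = 4 ∧
      ω (star (E₁ * F₁ - F₁ * E₁) * (E₁ * F₁ - F₁ * E₁)) = 1 / 4 ∧
      ω (star (E₁ * F₁ - F₁ * E₁) * (E₁ * F₁ - F₁ * E₁)) ≠ 0 := by
  have hA₁sa : IsSelfAdjoint A₁ := hA₁ ▸ ((IsSelfAdjoint.ofNat 2).smul hE₁sa).sub hSsa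
  have hB₁sa : IsSelfAdjoint B₁ := hB₁ ▸ ((IsSelfAdjoint.ofNat 2).smul hF₁sa).sub hSsa
  have hcomm : A₁ * B₁ - B₁ * A₁ = (4 : ℂ) • (E₁ * F₁ - F₁ * E₁) := by
    rw [hA₁, hB₁]; exact commutator_two_smul_sub hSE₁ hE₁S hSF₁ hF₁S
  have hrel : star (E₁ * F₁ - F₁ * E₁) * (E₁ * F₁ - F₁ * E₁) =
      (16 : ℂ)⁻¹ • (star (A₁ * B₁ - B₁ * A₁) * (A₁ * B₁ - B₁ * A₁)) := by
    rw [hcomm, star_smul, star_ofNat, smul_mul_smul_comm, smul_smul]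
    norm_num
  have hω : ω (star (A₁ * B₁ - B₁ * A₁) * (A₁ * B₁ - B₁ * A₁)) = 4 := by
    rw [hA₁sa.star_mul_self_commutator_of_anticommute hB₁sa hSp hA₁sq hB₁sq hanti,
      ← Nat.cast_ofNat, ← nsmul_eq_mul, ← ofNat_smul_eq_nsmul ℂ, map_smul, hS, smul_eq_mul, mul_one]
  have hω' : ω (star (E₁ * F₁ - F₁ * E₁) * (E₁ * F₁ - F₁ * E₁)) = 1 / 4 := by
    rw [hrel, map_smul, hω]; norm_num
  exact ⟨hrel, hω, hω', hω' ▸ by norm_num⟩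

/-- For `A₁ = 2E₁ - S`, `B₁ = 2F₁ - S` with `E₁, F₁` projections dominated by `S`
satisfying `A₁B₁ + B₁A₁ = 0` and `A₁² = B₁² = S`, and a state `ω` with `ω(S) = 1`:
`[E₁,F₁]*[E₁,F₁] = (1/16)[A₁,B₁]*[A₁,B₁]`, `ω([A₁,B₁]*[A₁,B₁]) = 4`, hence
`ω([E₁,F₁]*[E₁,F₁]) = 1/4 ≠ 0`. -/
theorem stmt_8 {H : Type*} [NormedAddCommGroup H] [InnerProductSpace ℂ H] [CompleteSpace H]
    (S E₁ F₁ : H →L[ℂ] H)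
    (hSp : IsIdempotentElem S) (hSsa : IsSelfAdjoint S)
    (hE₁p : IsIdempotentElem E₁) (hE₁sa : IsSelfAdjoint E₁)
    (hF₁p : IsIdempotentElem F₁) (hF₁sa : IsSelfAdjoint F₁)
    (hE₁S : S * E₁ = E₁) (hSE₁ : E₁ * S = E₁) (hF₁S : S * F₁ = F₁) (hSF₁ : F₁ * S = F₁)
    (A₁ B₁ : H →L[ℂ] H)
    (hA₁ : A₁ = (2 : ℂ) • E₁ - S) (hB₁ : B₁ = (2 : ℂ) • F₁ - S)
    (hanti : A₁ * B₁ + B₁ * A₁ = 0)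
    (hA₁sq : A₁ * A₁ = S) (hB₁sq : B₁ * B₁ = S)
    (ω : (H →L[ℂ] H) →ₗ[ℂ] ℂ)
    (hpos : ∀ X : H →L[ℂ] H, 0 ≤ (ω (star X * X)).re ∧ (ω (star X * X)).im = 0)
    (hone : ω 1 = 1) (hS : ω S = 1) :
    star (E₁ * F₁ - F₁ * E₁) * (E₁ * F₁ - F₁ * E₁) =
        (16 : ℂ)⁻¹ • (star (A₁ * B₁ - B₁ * A₁) * (A₁ * B₁ - B₁ * A₁)) ∧
      ω (star (A₁ * B₁ - B₁ * A₁) * (A₁ * B₁ - B₁ * A₁)) = 4 ∧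
      ω (star (E₁ * F₁ - F₁ * E₁) * (E₁ * F₁ - F₁ * E₁)) = 1 / 4 ∧
      ω (star (E₁ * F₁ - F₁ * E₁) * (E₁ * F₁ - F₁ * E₁)) ≠ 0 :=
  stmt_8_general S E₁ F₁ hSp hSsa hE₁sa hF₁sa hE₁S hSE₁ hF₁S hSF₁ A₁ B₁ hA₁ hB₁ hanti hA₁sq hB₁sq ω
    hS
end

section
/- Let ω be a state and A₁, B₁, A₂, B₂ self-adjoint contractions with [A_i, A_j] = [A_i, B_j] = [B_i, B_j] = 0 for i ≠ j. If ω is a vector state ω(X) = ⟨Ω, XΩ⟩ and there exist projections E₁,F₁ commuting with E₂,F₂ with E₁Ω = E₂Ω, F₁Ω = F₂Ω, (2E₁-1)(2F₁-1) + (2F₁-1)(2E₁-1) = 0, then setting A₁ = (1/√2)((2E₁-1)+(2F₁-1)), B₁ = (1/√2)((2E₁-1)-(2F₁-1)), A₂ = 2E₂-1, B₂ = 2F₂-1 yields (1/2)ω(A₁A₂ + A₁B₂ + B₁A₂ - B₁B₂) = √2. -/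
/-!
Put `a = 2E₁ - 1` and `b = 2F₁ - 1`; these are involutions because `E₁, F₁` are idempotent.
The CHSH combination collapses to `√2 (a A₂ + b B₂)`, and since `A₂Ω = aΩ`, `B₂Ω = bΩ` it maps
`Ω` to `√2 (a²Ω + b²Ω) = 2√2 Ω`, so the expectation of the combination is `2√2`.
-/

theorem IsIdempotentElem.two_mul_sub_one_mul_self {R : Type*} [Ring R] {p : R}
    (hp : IsIdempotentElem p) : (2 * p - 1) * (2 * p - 1) = 1 := by
  have hp' : p * p = p := hp
  noncomm_ring [hp']

theorem chsh_combination_eq {𝕜 R : Type*} [CommRing 𝕜] [Ring R] [Algebra 𝕜 R]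
    (c : 𝕜) (a b x y : R) :
    c • (a + b) * x + c • (a + b) * y + c • (a - b) * x - c • (a - b) * y =
      (2 * c) • (a * x + b * y) := by
  simp only [smul_mul_assoc, add_mul, sub_mul, mul_smul]
  module

theorem ContinuousLinearMap.mul_apply_eq_self_of_mul_self_eq_one {R M : Type*} [Semiring R]
    [TopologicalSpace M] [AddCommMonoid M] [Module R M] {S T : M →L[R] M} {v : M}
    (hT : T * T = 1) (hST : S v = T v) : (T * S) v = v := by
  simpa [hST] using congr($hT v)

theorem stmt_18_general {H : Type*} [NormedAddCommGroup H] [InnerProductSpace ℂ H]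
    (Ω : H) (hΩ : ‖Ω‖ = 1)
    (E₁ F₁ E₂ F₂ : H →L[ℂ] H)
    (hE₁p : IsIdempotentElem E₁)
    (hF₁p : IsIdempotentElem F₁)
    (hEΩ : E₁ Ω = E₂ Ω) (hFΩ : F₁ Ω = F₂ Ω)
    (A₁ B₁ A₂ B₂ : H →L[ℂ] H)
    (hA₁ : A₁ = ((Real.sqrt 2 : ℂ))⁻¹ • (((2 : ℂ) • E₁ - 1) + ((2 : ℂ) • F₁ - 1)))
    (hB₁ : B₁ = ((Real.sqrt 2 : ℂ))⁻¹ • (((2 : ℂ) • E₁ - 1) - ((2 : ℂ) • F₁ - 1)))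
    (hA₂ : A₂ = (2 : ℂ) • E₂ - 1) (hB₂ : B₂ = (2 : ℂ) • F₂ - 1) :
    (2 : ℂ)⁻¹ * inner (𝕜 := ℂ) Ω ((A₁ * A₂ + A₁ * B₂ + B₁ * A₂ - B₁ * B₂) Ω) =
      (Real.sqrt 2 : ℂ) := by
  have two_smul_eq_two_mul (T : H →L[ℂ] H) : (2 : ℂ) • T = 2 * T := by rw [two_smul, two_mul]
  have haA₂ : (((2 : ℂ) • E₁ - 1) * A₂) Ω = Ω :=
    ContinuousLinearMap.mul_apply_eq_self_of_mul_self_eq_one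
      (by simpa only [two_smul_eq_two_mul] using hE₁p.two_mul_sub_one_mul_self)
      (by simp [hA₂, hEΩ])
  have hbB₂ : (((2 : ℂ) • F₁ - 1) * B₂) Ω = Ω :=
    ContinuousLinearMap.mul_apply_eq_self_of_mul_self_eq_one
      (by simpa only [two_smul_eq_two_mul] using hF₁p.two_mul_sub_one_mul_self)
      (by simp [hB₂, hFΩ])
  have two_div_sqrt_two : (2 : ℂ) * (Real.sqrt 2 : ℂ)⁻¹ = Real.sqrt 2 := by
    exact_mod_cast Real.div_sqrt (x := 2)
  rw [hA₁, hB₁, chsh_combination_eq, smul_apply, add_apply, haA₂, hbB₂, inner_smul_right,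
    inner_add_right, inner_self_eq_one_of_norm_eq_one hΩ]
  linear_combination two_div_sqrt_two

/-- If `E₁, F₁` are projections commuting with projections `E₂, F₂`,
`E₁Ω = E₂Ω`, `F₁Ω = F₂Ω`, and `2E₁-1`, `2F₁-1` anticommute, then the CHSH expression with
`A₁ = (1/√2)((2E₁-1)+(2F₁-1))`, `B₁ = (1/√2)((2E₁-1)-(2F₁-1))`, `A₂ = 2E₂-1`, `B₂ = 2F₂-1`
attains the Tsirelson bound `√2` in the vector state induced by `Ω`. -/
theorem stmt_18 {H : Type*} [NormedAddCommGroup H] [InnerProductSpace ℂ H] [CompleteSpace H]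
    (Ω : H) (hΩ : ‖Ω‖ = 1)
    (E₁ F₁ E₂ F₂ : H →L[ℂ] H)
    (hE₁p : IsIdempotentElem E₁) (hE₁sa : IsSelfAdjoint E₁)
    (hF₁p : IsIdempotentElem F₁) (hF₁sa : IsSelfAdjoint F₁)
    (hE₂p : IsIdempotentElem E₂) (hE₂sa : IsSelfAdjoint E₂)
    (hF₂p : IsIdempotentElem F₂) (hF₂sa : IsSelfAdjoint F₂)
    (hc₁ : E₁ * E₂ = E₂ * E₁) (hc₂ : E₁ * F₂ = F₂ * E₁)
    (hc₃ : F₁ * E₂ = E₂ * F₁) (hc₄ : F₁ * F₂ = F₂ * F₁)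
    (hEΩ : E₁ Ω = E₂ Ω) (hFΩ : F₁ Ω = F₂ Ω)
    (hanti : ((2 : ℂ) • E₁ - 1) * ((2 : ℂ) • F₁ - 1) +
      ((2 : ℂ) • F₁ - 1) * ((2 : ℂ) • E₁ - 1) = 0)
    (A₁ B₁ A₂ B₂ : H →L[ℂ] H)
    (hA₁ : A₁ = ((Real.sqrt 2 : ℂ))⁻¹ • (((2 : ℂ) • E₁ - 1) + ((2 : ℂ) • F₁ - 1)))
    (hB₁ : B₁ = ((Real.sqrt 2 : ℂ))⁻¹ • (((2 : ℂ) • E₁ - 1) - ((2 : ℂ) • F₁ - 1)))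
    (hA₂ : A₂ = (2 : ℂ) • E₂ - 1) (hB₂ : B₂ = (2 : ℂ) • F₂ - 1) :
    (2 : ℂ)⁻¹ * inner (𝕜 := ℂ) Ω ((A₁ * A₂ + A₁ * B₂ + B₁ * A₂ - B₁ * B₂) Ω) =
      (Real.sqrt 2 : ℂ) :=
  stmt_18_general Ω hΩ E₁ F₁ E₂ F₂ hE₁p hF₁p hEΩ hFΩ A₁ B₁ A₂ B₂ hA₁ hB₁ hA₂ hB₂
end
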